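/- Let k ≥ 1, m ≥ 1, len = k + m, a = ⌊len/m⌋, b = len mod m, and let P be the rack placement of the stripe given by the D³ grouping (viewing each group as one rack). Then the total repair cost satisfies Σ_{B=0}^{len−1} c_P(B) = (a−1)(k+1) + a(m−1) if b = m − 1, and Σ_{B=0}^{len−1} c_P(B) = (a−1)(k+m) otherwise. Equivalently, the average number of cross-rack accessed blocks for recovering one failed block under the D³ layout equals μ = ((a−1)(k+1) + a(m−1))/(k+m) if b = m − 1 and μ = a − 1 otherwise. -/

import Mathlib

/-- Ceiling division of naturals: `⌈a / b⌉ = (a + b - 1) / b`. -/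
def cdiv (a b : ℕ) : ℕ := (a + b - 1) / b

/-- `N_g = ⌈len / m⌉`, the number of groups of the D³ grouping. -/
def Ng (len m : ℕ) : ℕ := cdiv len m

/-- `Size_max = ⌈len / N_g⌉`. -/
def sizeMax (len m : ℕ) : ℕ := cdiv len (Ng len m)

/-- `Size_min = ⌊len / N_g⌋`. -/
def sizeMin (len m : ℕ) : ℕ := len / Ng len m

/-- `t = len mod N_g`, the number of groups of size `Size_max`. -/
def tG (len m : ℕ) : ℕ := len % Ng len m

/-- The size of the `j`-th group of the D³ grouping: the first `t` groups have
`Size_max` blocks, the remaining `N_g - t` groups have `Size_min` blocks. -/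
def groupSize (len m j : ℕ) : ℕ :=
  if j < tG len m then sizeMax len m else sizeMin len m

/-- The index of the group of the D³ grouping containing block `x`
(the groups are consecutive runs of block indices). -/
def groupOf (len m x : ℕ) : ℕ :=
  if x < tG len m * sizeMax len m then x / sizeMax len m
  else tG len m + (x - tG len m * sizeMax len m) / sizeMin len m

/-- The position of block `x` within its group under the D³ grouping. -/
def offsetOf (len m x : ℕ) : ℕ :=
  if x < tG len m * sizeMax len m then x % sizeMax len m
  else (x - tG len m * sizeMax len m) % sizeMin len m

/-- The cross-rack cost of a repair choice: a rack placement `P` of the stripe's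
blocks, a set `S` of helper blocks and a target rack `T` incur one cross-rack
aggregated block for each rack other than `T` that intersects `S`. -/
def crossCost (len : ℕ) (P : Fin len → ℕ) (S : Finset (Fin len)) (T : ℕ) : ℕ :=
  ((S.filter (fun x => P x ≠ T)).image P).card

/-- The repair cost `c_P(B)` of a failed block `B` under rack placement `P`:
the minimum cross-rack cost over all repair choices, i.e. over all sets `S` of
`k` helper blocks with `B ∉ S` together with a target rack `T` that holds at
most `m - 1` blocks other than `B` (a part of `P` with `|T \ {B}| ≤ m - 1`,
or a new empty rack). -/
noncomputable def repairCost (len k m : ℕ) (P : Fin len → ℕ) (B : Fin len) : ℕ :=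
  sInf {c : ℕ | ∃ (S : Finset (Fin len)) (T : ℕ),
    S.card = k ∧ B ∉ S ∧
    (Finset.univ.filter (fun x => P x = T ∧ x ≠ B)).card ≤ m - 1 ∧
    c = crossCost len P S T}

/-!
Removing the `k` helper blocks of a repair leaves exactly `m` blocks, the failed one among them.
In the D³ layout every rack holds at most `m` blocks while any two racks together hold more than
`m`, so at most one rack is missed by the helpers; with `N_g` racks every repair therefore
crosses at least `N_g - 2` racks, and at least `N_g - 1` when all racks other than the failed
block's are full, since a full rack can then neither be missed nor serve as target. Taking the
helpers outside the failed block's rack, with target that rack or another non-full rack, attains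
these bounds. Summing over blocks only requires counting the non-full D³ groups: none if
`b = 0`, exactly one (of `m - 1` blocks) if `b = m - 1`, and at least two otherwise.
-/

open Finset

lemma cdiv_eq (a : ℕ) {b : ℕ} (hb : 0 < b) : cdiv a b = a / b + if a % b = 0 then 0 else 1 := by
  obtain ⟨c, rfl⟩ : ∃ c, b = c + 1 := ⟨b - 1, by omega⟩
  rw [cdiv, show a + (c + 1) - 1 = a + c by omega, Nat.add_div hb, Nat.div_eq_of_lt c.lt_succ_self,
    Nat.mod_eq_of_lt c.lt_succ_self]
  split_ifs <;> omega

lemma cdiv_le_iff {a b c : ℕ} (hb : 0 < b) : cdiv a b ≤ c ↔ a ≤ b * c :=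
  ceilDiv_le_iff_le_mul hb

lemma div_eq_iff_mul_le_lt {a b c : ℕ} (hb : 0 < b) :
    a / b = c ↔ c * b ≤ a ∧ a < (c + 1) * b := by
  rw [← Nat.le_div_iff_mul_le hb, ← Nat.div_lt_iff_lt_mul hb]
  omega

lemma card_filter_le_val_lt_add {n s d : ℕ} (h : s + d ≤ n) :
    #{x : Fin n | s ≤ (x : ℕ) ∧ (x : ℕ) < s + d} = d := by
  rw [← card_map Fin.valEmbedding]
  convert Nat.card_Ico s (s + d) using 2 <;> try omega
  ext y
  simp only [mem_map, mem_filter, mem_univ, true_and, Fin.valEmbedding_apply, mem_Ico]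
  exact ⟨by rintro ⟨x, hx, rfl⟩; exact hx, fun hy => ⟨⟨y, by omega⟩, hy, rfl⟩⟩

def rack {n : ℕ} (P : Fin n → ℕ) (j : ℕ) : Finset (Fin n) := {x | P x = j}

section RepairCost

variable {n k m : ℕ}

lemma crossCost_eq_card_erase (P : Fin n → ℕ) (S : Finset (Fin n)) (T : ℕ) :
    crossCost n P S T = #((S.image P).erase T) := by
  rw [crossCost, ← filter_ne', filter_image]

lemma repairCost_eq_of_exists_le_of_forall_le (P : Fin n → ℕ) {B : Fin n} {c : ℕ}
    (hchoice : ∃ S T, #S = k ∧ B ∉ S ∧ #((rack P T).erase B) ≤ m - 1 ∧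
      crossCost n P S T ≤ c)
    (hlower : ∀ S T, #S = k → B ∉ S → #((rack P T).erase B) ≤ m - 1 →
      c ≤ crossCost n P S T) :
    repairCost n k m P B = c := by
  have hfilter (T : ℕ) : ({x | P x = T ∧ x ≠ B} : Finset (Fin n)) = (rack P T).erase B := by
    ext x; simp [rack, and_comm]
  obtain ⟨S, T, hS, hBS, hT, hc⟩ := hchoice
  simp only [repairCost, hfilter]
  apply le_antisymm
  · exact (Nat.sInf_le (by exact ⟨S, T, hS, hBS, hT, rfl⟩)).trans hc
  · refine le_csInf ⟨_, S, T, hS, hBS, hT, rfl⟩ ?_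
    rintro _ ⟨S', T', hS', hBS', hT', rfl⟩
    exact hlower S' T' hS' hBS' hT'

variable (P : Fin (k + m) → ℕ)

lemma exists_card_eq_disjoint_rack (j : ℕ) (hj : #(rack P j) ≤ m) :
    ∃ S : Finset (Fin (k + m)), #S = k ∧ ∀ x ∈ S, P x ≠ j := by
  obtain ⟨S, hS, hcard⟩ := exists_subset_card_eq (s := (rack P j)ᶜ) (n := k)
    (by rw [card_compl, Fintype.card_fin]; omega)
  exact ⟨S, hcard, fun x hx => by simpa [rack] using hS hx⟩

lemma card_rack_add_card_rack_le (S : Finset (Fin (k + m))) (hS : #S = k) {i j : ℕ}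
    (hij : i ≠ j) (hi : i ∉ S.image P) (hj : j ∉ S.image P) :
    #(rack P i) + #(rack P j) ≤ m := by
  have hdisj : Disjoint (rack P i) (rack P j) :=
    disjoint_filter.2 fun x _ hxi hxj => hij (hxi.symm.trans hxj)
  have hsub : rack P i ∪ rack P j ⊆ Sᶜ := by
    intro x hx
    simp only [mem_union, rack, mem_filter, mem_univ, true_and] at hx
    rw [mem_compl]
    rintro hxS
    rcases hx with rfl | rfl
    exacts [hi (mem_image_of_mem P hxS), hj (mem_image_of_mem P hxS)]
  have := card_le_card hsub
  rwa [card_union_of_disjoint hdisj, card_compl, Fintype.card_fin, hS, Nat.add_sub_cancel_left]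
    at this

lemma card_image_univ_le_card_image_add_one
    (hpair : ∀ i ∈ univ.image P, ∀ j ∈ univ.image P, i ≠ j →
      m < #(rack P i) + #(rack P j))
    (S : Finset (Fin (k + m))) (hS : #S = k) :
    #(univ.image P) ≤ #(S.image P) + 1 := by
  have hmissing : #(univ.image P \ S.image P) ≤ 1 := by
    refine card_le_one.2 fun i hi j hj => by_contra fun hij => ?_
    rw [mem_sdiff] at hi hj
    have := card_rack_add_card_rack_le P S hS hij hi.2 hj.2
    have := hpair i hi.1 j hj.1 hij
    omega
  have := card_le_card_sdiff_add_card (s := univ.image P) (t := S.image P)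
  omega

theorem repairCost_eq_card_image_sub_one (B : Fin (k + m)) (hB : #(rack P (P B)) ≤ m)
    (hfull : ∀ j ∈ univ.image P, j ≠ P B → #(rack P j) = m) :
    repairCost (k + m) k m P B = #(univ.image P) - 1 := by
  have hPB : P B ∈ univ.image P := mem_image_of_mem P (mem_univ B)
  apply repairCost_eq_of_exists_le_of_forall_le
  · obtain ⟨S, hS, hSB⟩ := exists_card_eq_disjoint_rack P (P B) hB
    refine ⟨S, P B, hS, fun h => hSB B h rfl,
      by rw [card_erase_of_mem (by simp [rack])]; omega, ?_⟩
    rw [crossCost_eq_card_erase, ← card_erase_of_mem hPB]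
    refine card_le_card fun j hj => ?_
    obtain ⟨hjB, x, hx, rfl⟩ := by simpa using hj
    exact mem_erase.2 ⟨hjB, mem_image_of_mem P (mem_univ x)⟩
  · intro S T hS hBS hT
    rw [crossCost_eq_card_erase, ← card_erase_of_mem hPB]
    refine card_le_card fun j hj => ?_
    obtain ⟨hjB, hj⟩ := mem_erase.1 hj
    have hrack := hfull j hj hjB
    have hBj : B ∉ rack P j := by simpa [rack] using Ne.symm hjB
    refine mem_erase.2 ⟨fun hjT => ?_, ?_⟩
    · subst hjT
      obtain ⟨x, -, rfl⟩ := mem_image.1 hj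
      have : 0 < #(rack P (P x)) := card_pos.2 ⟨x, by simp [rack]⟩
      rw [erase_eq_of_notMem hBj] at hT
      omega
    · by_contra hjS
      have hsub : insert B (rack P j) ⊆ Sᶜ := by
        intro x hx
        rcases mem_insert.1 hx with rfl | hx
        · exact mem_compl.2 hBS
        · have hPx : P x = j := by simpa [rack] using hx
          exact mem_compl.2 fun hxS => hjS (hPx ▸ mem_image_of_mem P hxS)
      have := card_le_card hsub
      rw [card_insert_of_notMem hBj, card_compl, Fintype.card_fin, hS] at this
      omega

theorem repairCost_eq_card_image_sub_two (B : Fin (k + m)) (hB : #(rack P (P B)) ≤ m)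
    (hpair : ∀ i ∈ univ.image P, ∀ j ∈ univ.image P, i ≠ j →
      m < #(rack P i) + #(rack P j))
    {j : ℕ} (hj : j ∈ univ.image P) (hjB : j ≠ P B) (hjm : #(rack P j) < m) :
    repairCost (k + m) k m P B = #(univ.image P) - 2 := by
  have hPB : P B ∈ univ.image P := mem_image_of_mem P (mem_univ B)
  apply repairCost_eq_of_exists_le_of_forall_le
  · obtain ⟨S, hS, hSB⟩ := exists_card_eq_disjoint_rack P (P B) hB
    refine ⟨S, j, hS, fun h => hSB B h rfl, (card_erase_le).trans (by omega), ?_⟩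
    have hcard : #(((univ.image P).erase (P B)).erase j) = #(univ.image P) - 2 := by
      rw [card_erase_of_mem (mem_erase.2 ⟨hjB, hj⟩), card_erase_of_mem hPB, Nat.sub_sub]
    rw [crossCost_eq_card_erase, ← hcard]
    refine card_le_card fun i hi => ?_
    obtain ⟨hij, x, hx, rfl⟩ := by simpa using hi
    exact mem_erase.2 ⟨hij, mem_erase.2 ⟨hSB x hx, mem_image_of_mem P (mem_univ x)⟩⟩
  · intro S T hS _ _
    have := card_image_univ_le_card_image_add_one P hpair S hS
    have := pred_card_le_card_erase (s := S.image P) (a := T)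
    rw [crossCost_eq_card_erase]
    omega

end RepairCost

section D3Grouping

variable {len m : ℕ}

lemma Ng_pos (hm : 0 < m) (hlen : 0 < len) : 0 < Ng len m :=
  Nat.pos_of_ne_zero fun h => by simpa [h] using ((cdiv_le_iff hm).1 h.le).trans_lt' hlen

lemma len_le_mul_Ng (hm : 0 < m) : len ≤ m * Ng len m := (cdiv_le_iff hm).1 le_rfl

lemma mul_Ng_sub_one_lt (hm : 0 < m) (hlen : 0 < len) : m * (Ng len m - 1) < len := by
  by_contra h
  have := (cdiv_le_iff hm).2 (not_lt.1 h)
  have := Ng_pos hm hlen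
  unfold Ng at *; omega

lemma Ng_le (hm : 0 < m) : Ng len m ≤ len := (cdiv_le_iff hm).2 (Nat.le_mul_of_pos_left len hm)

lemma two_le_Ng (hm : 0 < m) (hlen : m < len) : 2 ≤ Ng len m := by
  by_contra h
  have := (cdiv_le_iff (a := len) (c := 1) hm).1 (by unfold Ng at h; omega)
  omega

lemma sizeMin_pos (hm : 0 < m) (hlen : 0 < len) : 0 < sizeMin len m :=
  Nat.div_pos (Ng_le hm) (Ng_pos hm hlen)

lemma Ng_mul_sizeMin_add_tG (len m : ℕ) : Ng len m * sizeMin len m + tG len m = len :=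
  Nat.div_add_mod len (Ng len m)

lemma tG_lt_Ng (hm : 0 < m) (hlen : 0 < len) : tG len m < Ng len m :=
  Nat.mod_lt len (Ng_pos hm hlen)

lemma groupSize_eq (hm : 0 < m) (hlen : 0 < len) (j : ℕ) :
    groupSize len m j = sizeMin len m + if j < tG len m then 1 else 0 := by
  rw [groupSize, sizeMax, cdiv_eq len (Ng_pos hm hlen)]
  unfold sizeMin tG
  split_ifs <;> omega

-- The first `tG` groups hold one block more than `sizeMin`, hence the `min`.
def groupStart (len m j : ℕ) : ℕ := j * sizeMin len m + min j (tG len m)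

lemma groupOf_eq_iff (hm : 0 < m) (hlen : 0 < len) (x j : ℕ) :
    groupOf len m x = j ↔
      groupStart len m j ≤ x ∧ x < groupStart len m j + groupSize len m j := by
  have hq := sizeMin_pos hm hlen
  have hMax : sizeMax len m = sizeMin len m + if tG len m = 0 then 0 else 1 :=
    cdiv_eq len (Ng_pos hm hlen)
  rw [groupOf, groupStart, groupSize_eq hm hlen, hMax]
  generalize sizeMin len m = q at *
  generalize tG len m = r at *
  by_cases hr : r = 0
  · subst hr
    simp only [if_true, add_zero, zero_mul, Nat.sub_zero, zero_add, Nat.not_lt_zero, if_false,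
      Nat.min_zero]
    rw [div_eq_iff_mul_le_lt hq, add_one_mul]
  simp only [hr, if_false]
  have e1 : (j + 1) * (q + 1) = j * q + j + q + 1 := by ring
  have e2 : r * (q + 1) = r * q + r := by ring
  have m1 : r ≤ j → r * q ≤ j * q := fun h => Nat.mul_le_mul_right q h
  have m2 : j + 1 ≤ r → j * q + q ≤ r * q := fun h => by
    simpa [add_one_mul] using Nat.mul_le_mul_right q h
  split_ifs with hx hjr hjr
  · rw [div_eq_iff_mul_le_lt (by omega), e1, mul_add_one]
    omega
  · have := (Nat.div_lt_iff_lt_mul (by omega)).2 hx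
    have := m1 (by omega)
    omega
  · have := m2 (by omega)
    -- `omega` treats this quotient as an opaque integer atom.
    have := Nat.zero_le ((x - r * (q + 1)) / q)
    omega
  · have e3 : (j - r) * q + r * q = j * q := by rw [← add_mul, Nat.sub_add_cancel (by omega)]
    rw [show r + (x - r * (q + 1)) / q = j ↔ (x - r * (q + 1)) / q = j - r by omega,
      div_eq_iff_mul_le_lt hq, add_one_mul]
    omega

lemma groupStart_add_groupSize_le (hm : 0 < m) (hlen : 0 < len) {j : ℕ} (hj : j < Ng len m) :
    groupStart len m j + groupSize len m j ≤ len := by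
  have hle : (j + 1) * sizeMin len m ≤ Ng len m * sizeMin len m := Nat.mul_le_mul_right _ hj
  have := Ng_mul_sizeMin_add_tG len m
  have := tG_lt_Ng hm hlen
  rw [add_one_mul] at hle
  rw [groupStart, groupSize_eq hm hlen]
  split_ifs <;> omega

lemma le_groupStart (hm : 0 < m) (hlen : 0 < len) {j : ℕ} (hj : Ng len m ≤ j) :
    len ≤ groupStart len m j := by
  have := Nat.mul_le_mul_right (sizeMin len m) hj
  have := Ng_mul_sizeMin_add_tG len m
  have := tG_lt_Ng hm hlen
  rw [groupStart]
  omega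

lemma groupOf_lt_Ng (hm : 0 < m) (hlen : 0 < len) {x : ℕ} (hx : x < len) :
    groupOf len m x < Ng len m := by
  by_contra h
  have := ((groupOf_eq_iff hm hlen x _).1 rfl).1
  have := le_groupStart hm hlen (not_lt.1 h)
  omega

lemma card_rack_groupOf (hm : 0 < m) (hlen : 0 < len) {j : ℕ} (hj : j < Ng len m) :
    #(rack (fun x : Fin len => groupOf len m x) j) = groupSize len m j := by
  simp only [rack, groupOf_eq_iff hm hlen]
  exact card_filter_le_val_lt_add (groupStart_add_groupSize_le hm hlen hj)

lemma image_groupOf (hm : 0 < m) (hlen : 0 < len) :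
    univ.image (fun x : Fin len => groupOf len m x) = range (Ng len m) := by
  ext j
  simp only [mem_image, mem_univ, true_and, mem_range]
  refine ⟨fun ⟨x, hx⟩ => hx ▸ groupOf_lt_Ng hm hlen x.isLt, fun hj => ?_⟩
  have : 0 < #(rack (fun x : Fin len => groupOf len m x) j) := by
    rw [card_rack_groupOf hm hlen hj, groupSize_eq hm hlen]
    have := sizeMin_pos hm hlen
    omega
  obtain ⟨x, hx⟩ := card_pos.1 this
  exact ⟨x, by simpa [rack] using hx⟩

lemma groupSize_le (hm : 0 < m) (hlen : 0 < len) (j : ℕ) : groupSize len m j ≤ m := by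
  have hsum := Ng_mul_sizeMin_add_tG len m
  have hmul := len_le_mul_Ng (len := len) hm
  have hN := Ng_pos hm hlen
  rw [groupSize_eq hm hlen]
  split_ifs with hj
  · have : Ng len m * sizeMin len m < Ng len m * m := by rw [mul_comm _ m]; omega
    have := Nat.lt_of_mul_lt_mul_left this
    omega
  · have : Ng len m * sizeMin len m ≤ Ng len m * m := by rw [mul_comm _ m]; omega
    simpa using Nat.le_of_mul_le_mul_left this hN

lemma lt_groupSize_add_groupSize (hm : 0 < m) (hlen : m < len) {i j : ℕ} (hi : i < Ng len m)
    (hj : j < Ng len m) (hij : i ≠ j) : m < groupSize len m i + groupSize len m j := by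
  have hsum := Ng_mul_sizeMin_add_tG len m
  have hlt := mul_Ng_sub_one_lt (len := len) hm (by omega)
  have hN := two_le_Ng hm hlen
  have hr := tG_lt_Ng hm (by omega : 0 < len)
  have hq := sizeMin_pos hm (by omega : 0 < len)
  rw [groupSize_eq hm (by omega), groupSize_eq hm (by omega)]
  generalize Ng len m = N at *
  generalize sizeMin len m = q at *
  generalize tG len m = r at *
  obtain ⟨N, rfl⟩ : ∃ N', N = N' + 1 := ⟨N - 1, by omega⟩
  simp only [Nat.add_sub_cancel] at hlt
  have hA : m ≤ 2 * q := by nlinarith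
  have hB : r + 2 ≤ N + 1 → m < 2 * q := fun h => by nlinarith
  split_ifs <;> omega

lemma Ng_of_mod_eq_zero (hm : 0 < m) (hb : len % m = 0) : Ng len m = len / m := by
  rw [Ng, cdiv_eq len hm, if_pos hb, add_zero]

lemma groupSize_of_mod_eq_zero (hm : 0 < m) (hlen : 0 < len) (hb : len % m = 0) (j : ℕ) :
    groupSize len m j = m := by
  have hN := Ng_of_mod_eq_zero hm hb
  obtain ⟨a, rfl⟩ := Nat.dvd_of_mod_eq_zero hb
  rw [Nat.mul_div_cancel_left a hm] at hN
  rw [groupSize_eq hm hlen, sizeMin, tG, hN, Nat.mul_div_cancel _ (Nat.pos_of_mul_pos_left hlen),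
    Nat.mul_mod_left, if_neg (Nat.not_lt_zero j), add_zero]

lemma Ng_of_mod_ne_zero (hm : 0 < m) (hb : len % m ≠ 0) : Ng len m = len / m + 1 := by
  rw [Ng, cdiv_eq len hm, if_neg hb]

lemma groupSize_of_mod_eq_pred (hm : 1 < m) (hb : len % m = m - 1) (j : ℕ) :
    groupSize len m j = if j < len / m then m else m - 1 := by
  have hN := Ng_of_mod_ne_zero (len := len) (m := m) (by omega) (by omega)
  have hdm := Nat.div_add_mod len m
  generalize len / m = a at *
  have hlen : len = a + (a + 1) * (m - 1) := by
    obtain ⟨m', rfl⟩ : ∃ m', m = m' + 1 := ⟨m - 1, by omega⟩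
    rw [Nat.add_sub_cancel] at hb ⊢
    rw [hb] at hdm
    linarith
  rw [groupSize_eq (by omega) (by omega), sizeMin, tG, hN, hlen,
    Nat.add_mul_div_left _ _ a.succ_pos, Nat.add_mul_mod_self_left,
    Nat.div_eq_of_lt a.lt_succ_self, Nat.mod_eq_of_lt a.lt_succ_self]
  split_ifs <;> omega

lemma sizeMin_lt_of_mod_ne_zero (hm : 0 < m) (hb : len % m ≠ 0) : sizeMin len m < m := by
  have hlt : len < m * Ng len m :=
    (len_le_mul_Ng hm).lt_of_ne fun h => hb (by rw [h, Nat.mul_mod_right])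
  have := Ng_mul_sizeMin_add_tG len m
  exact Nat.lt_of_mul_lt_mul_left (a := Ng len m) (by rw [mul_comm _ m]; omega)

lemma groupSize_Ng_sub_one_lt (hm : 0 < m) (hlen : 0 < len) (hb : len % m ≠ 0) :
    groupSize len m (Ng len m - 1) < m := by
  have := tG_lt_Ng hm hlen
  have := sizeMin_lt_of_mod_ne_zero hm hb
  rw [groupSize_eq hm hlen, if_neg (by omega)]
  omega

lemma groupSize_Ng_sub_two_lt (hm : 0 < m) (hlen : 0 < len) (hb0 : len % m ≠ 0)
    (hb1 : len % m ≠ m - 1) : groupSize len m (Ng len m - 2) < m := by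
  have hr := tG_lt_Ng hm hlen
  have hq := sizeMin_lt_of_mod_ne_zero hm hb0
  have hsum := Ng_mul_sizeMin_add_tG len m
  rw [groupSize_eq hm hlen]
  split_ifs with h
  · refine lt_of_le_of_ne (by omega) fun hqm => hb1 ?_
    generalize Ng len m = N at *
    generalize sizeMin len m = q at *
    generalize tG len m = r at *
    obtain ⟨N, rfl⟩ : ∃ N', N = N' + 1 := ⟨N - 1, by omega⟩
    have hlen : len = q + m * N := by rw [← hsum, ← hqm, show r = N by omega]; ring
    rw [hlen, Nat.add_mul_mod_self_left, Nat.mod_eq_of_lt (by omega)]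
    omega
  · omega

end D3Grouping

section D3Repair

variable {k m : ℕ}

theorem repairCost_groupOf_eq_Ng_sub_one (hm : 0 < m) (B : Fin (k + m))
    (hfull : ∀ j < Ng (k + m) m, j ≠ groupOf (k + m) m B → groupSize (k + m) m j = m) :
    repairCost (k + m) k m (fun x => groupOf (k + m) m (x : ℕ)) B = Ng (k + m) m - 1 := by
  have hlen : 0 < k + m := by omega
  have himage := image_groupOf hm hlen
  refine (repairCost_eq_card_image_sub_one _ B ?_ fun j hj hjB => ?_).trans
    (by rw [himage, card_range])
  · rw [card_rack_groupOf hm hlen (groupOf_lt_Ng hm hlen B.isLt)]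
    exact groupSize_le hm hlen _
  · rw [himage, mem_range] at hj
    rw [card_rack_groupOf hm hlen hj]
    exact hfull j hj hjB

theorem repairCost_groupOf_eq_Ng_sub_two (hk : 0 < k) (hm : 0 < m) (B : Fin (k + m)) {j : ℕ}
    (hj : j < Ng (k + m) m) (hjB : j ≠ groupOf (k + m) m B) (hjm : groupSize (k + m) m j < m) :
    repairCost (k + m) k m (fun x => groupOf (k + m) m (x : ℕ)) B = Ng (k + m) m - 2 := by
  have hlen : 0 < k + m := by omega
  have himage := image_groupOf hm hlen
  refine (repairCost_eq_card_image_sub_two _ B ?_ (fun i hi i' hi' hii' => ?_)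
    (himage ▸ mem_range.2 hj) hjB ?_).trans (by rw [himage, card_range])
  · rw [card_rack_groupOf hm hlen (groupOf_lt_Ng hm hlen B.isLt)]
    exact groupSize_le hm hlen _
  · rw [himage, mem_range] at hi hi'
    rw [card_rack_groupOf hm hlen hi, card_rack_groupOf hm hlen hi']
    exact lt_groupSize_add_groupSize hm (by omega) hi hi' hii'
  · rwa [card_rack_groupOf hm hlen hj]

lemma sum_repairCost_groupOf_of_mod_eq_zero (hm : 0 < m) (hb : (k + m) % m = 0) :
    ∑ B, repairCost (k + m) k m (fun x => groupOf (k + m) m (x : ℕ)) B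
      = (k + m) * ((k + m) / m - 1) := by
  have hcost (B : Fin (k + m)) := repairCost_groupOf_eq_Ng_sub_one hm B
    fun j _ _ => groupSize_of_mod_eq_zero hm (by omega) hb j
  simp [hcost, Ng_of_mod_eq_zero hm hb]

lemma sum_repairCost_groupOf_of_mod_eq_pred (hk : 0 < k) (hm : 1 < m)
    (hb : (k + m) % m = m - 1) :
    ∑ B, repairCost (k + m) k m (fun x => groupOf (k + m) m (x : ℕ)) B
      = (k + m) * ((k + m) / m - 1) + (m - 1) := by
  have hlen : 0 < k + m := by omega
  have hN := Ng_of_mod_ne_zero (len := k + m) (m := m) (by omega) (by omega)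
  have hsize := groupSize_of_mod_eq_pred hm hb
  have ha : 1 ≤ (k + m) / m := (Nat.one_le_div_iff (by omega)).2 (by omega)
  have hcost (B : Fin (k + m)) :
      repairCost (k + m) k m (fun x => groupOf (k + m) m (x : ℕ)) B
        = ((k + m) / m - 1) + if groupOf (k + m) m B = (k + m) / m then 1 else 0 := by
    split_ifs with hB
    · rw [repairCost_groupOf_eq_Ng_sub_one (by omega) B fun j hj hjB => ?_, hN]
      · omega
      · rw [hsize, if_pos (by omega)]
    · rw [repairCost_groupOf_eq_Ng_sub_two hk (by omega) B (j := (k + m) / m) (by omega)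
        (Ne.symm hB) (by rw [hsize, if_neg (lt_irrefl _)]; omega), hN]
      omega
  rw [sum_congr rfl fun B _ => hcost B, sum_add_distrib, sum_boole, Nat.cast_id]
  simp only [sum_const, card_univ, Fintype.card_fin, smul_eq_mul]
  rw [← rack, card_rack_groupOf (by omega) hlen (by omega), hsize, if_neg (lt_irrefl _)]

lemma sum_repairCost_groupOf_of_mod_ne (hk : 0 < k) (hm : 0 < m) (hb0 : (k + m) % m ≠ 0)
    (hb1 : (k + m) % m ≠ m - 1) :
    ∑ B, repairCost (k + m) k m (fun x => groupOf (k + m) m (x : ℕ)) B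
      = (k + m) * ((k + m) / m - 1) := by
  have hlen : 0 < k + m := by omega
  have hN := Ng_of_mod_ne_zero hm hb0
  have h2 := two_le_Ng hm (len := k + m) (by omega)
  have hcost (B : Fin (k + m)) :
      repairCost (k + m) k m (fun x => groupOf (k + m) m (x : ℕ)) B = (k + m) / m - 1 := by
    by_cases hB : groupOf (k + m) m B = Ng (k + m) m - 1
    · rw [repairCost_groupOf_eq_Ng_sub_two hk hm B (j := Ng (k + m) m - 2) (by omega)
        (by omega) (groupSize_Ng_sub_two_lt hm hlen hb0 hb1), hN]
      omega
    · rw [repairCost_groupOf_eq_Ng_sub_two hk hm B (j := Ng (k + m) m - 1) (by omega)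
        (Ne.symm hB) (groupSize_Ng_sub_one_lt hm hlen hb0), hN]
      omega
  simp [hcost]

end D3Repair

/-- Lemma 4 (exact cost of the D³ layout): under the D³ grouping of a stripe of
`len = k + m` blocks (each group being one rack), with `a = ⌊len/m⌋` and
`b = len mod m`, the total repair cost over all blocks equals
`(a-1)(k+1) + a(m-1)` if `b = m - 1`, and `(a-1)(k+m)` otherwise; equivalently
the average number of cross-rack accessed blocks for recovering one failed block
is `μ = ((a-1)(k+1) + a(m-1))/(k+m)` if `b = m - 1` and `μ = a - 1` otherwise. -/
theorem d3_repair_cost (k m : ℕ) (hk : 1 ≤ k) (hm : 1 ≤ m) :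
    (∑ B : Fin (k + m),
        repairCost (k + m) k m (fun x => groupOf (k + m) m (x : ℕ)) B)
      = if (k + m) % m = m - 1 then
          ((k + m) / m - 1) * (k + 1) + (k + m) / m * (m - 1)
        else ((k + m) / m - 1) * (k + m) := by
  obtain ⟨a, ha⟩ : ∃ a, (k + m) / m = a + 1 :=
    ⟨(k + m) / m - 1, by have := (Nat.one_le_div_iff hm).2 (by omega : m ≤ k + m); omega⟩
  by_cases hb0 : (k + m) % m = 0
  · rw [sum_repairCost_groupOf_of_mod_eq_zero hm hb0, ha]
    split_ifs with hb1
    · obtain rfl : m = 1 := by omega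
      simp only [Nat.add_sub_cancel, Nat.sub_self, mul_zero, add_zero]
      ring
    · ring
  by_cases hb1 : (k + m) % m = m - 1
  · rw [if_pos hb1, sum_repairCost_groupOf_of_mod_eq_pred hk (by omega) hb1, ha]
    obtain ⟨m, rfl⟩ : ∃ m', m = m' + 1 := ⟨m - 1, by omega⟩
    simp only [Nat.add_sub_cancel]
    ring
  · rw [if_neg hb1, sum_repairCost_groupOf_of_mod_ne hk hm hb0 hb1, mul_comm]
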